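/- Let θ ∈ [0, π/2), let n be a positive integer, and for j = 1, …, n let S_j, T_j ∈ Π_θ^{Ber,P} relative to K with S_j T_j = T_j S_j for each j. Then ( ber( Σ_{j=1}^n S_j T_j ) )² ≤ (1 + sin²θ)² · ( Σ_{j=1}^n (ber(S_j))² ) · ( Σ_{j=1}^n (ber(T_j))² ). -/

import Mathlib

open scoped InnerProductSpace
open ContinuousLinearMap

noncomputable section

variable {H : Type*} [NormedAddCommGroup H] [InnerProductSpace ℂ H] [CompleteSpace H]

/-- The Berezin number of `A` relative to a set `K` of unit vectors:
`ber(A) = sup_{x ∈ K} |⟨A x, x⟩|` (with the paper's inner product `⟨A x, x⟩ = ⟪x, A x⟫_ℂ`). -/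
def berNum (K : Set H) (A : H →L[ℂ] H) : ℝ :=
  ⨆ x : K, ‖⟪(x : H), A x⟫_ℂ‖

/-- The Berezin norm of `A` relative to `K`: `‖A‖_ber = sup_{x, y ∈ K} |⟨A x, y⟩|`. -/
def berNorm (K : Set H) (A : H →L[ℂ] H) : ℝ :=
  ⨆ x : K, ⨆ y : K, ‖⟪(y : H), A (x : H)⟫_ℂ‖

/-- The real part `Re(A) = (A + A*)/2` of an operator. -/
def reOp (A : H →L[ℂ] H) : H →L[ℂ] H := (2 : ℂ)⁻¹ • (A + adjoint A)

/-- The imaginary part `Im(A) = (A - A*)/(2i)` of an operator. -/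
def imOp (A : H →L[ℂ] H) : H →L[ℂ] H := (2 * Complex.I)⁻¹ • (A - adjoint A)

/-- `A` is Berezin sectorial with semi-angle `θ` relative to `K`:
every Berezin symbol value `⟨A x, x⟩`, `x ∈ K`, lies in the sector `S_θ`. -/
def BerSectorial (K : Set H) (θ : ℝ) (A : H →L[ℂ] H) : Prop :=
  ∀ x ∈ K, 0 ≤ (⟪x, A x⟫_ℂ).re ∧ |(⟪x, A x⟫_ℂ).im| ≤ Real.tan θ * (⟪x, A x⟫_ℂ).re

/-- `A ∈ Π_θ^{Ber,P}`: Berezin sectorial and both `Re(A)` and `Im(A)` satisfy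
the Berezin number power inequality. -/
def BerSectorialP (K : Set H) (θ : ℝ) (A : H →L[ℂ] H) : Prop :=
  BerSectorial K θ A ∧
    ∀ n : ℕ, 0 < n →
      berNum K (reOp A ^ n) ≤ berNum K (reOp A) ^ n ∧
      berNum K (imOp A ^ n) ≤ berNum K (imOp A) ^ n

set_option linter.unusedSectionVars false

lemma berNum_bdd (K : Set H) (hKunit : ∀ x ∈ K, ‖x‖ = 1) (A : H →L[ℂ] H) :
    BddAbove (Set.range fun x : K => ‖⟪(x : H), A x⟫_ℂ‖) := by
  refine ⟨‖A‖, ?_⟩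
  rintro _ ⟨x, rfl⟩
  have hx : ‖(x : H)‖ = 1 := hKunit x x.2
  calc ‖⟪(x : H), A x⟫_ℂ‖ = ‖⟪(x : H), A (x : H)⟫_ℂ‖ := rfl
    _ ≤ ‖(x : H)‖ * ‖A (x : H)‖ := norm_inner_le_norm _ _
    _ ≤ 1 * (‖A‖ * ‖(x : H)‖) := by
        refine mul_le_mul (le_of_eq hx) (A.le_opNorm _) (norm_nonneg _) zero_le_one
    _ = ‖A‖ := by rw [hx]; ring

lemma le_berNum (K : Set H) (hKunit : ∀ x ∈ K, ‖x‖ = 1) (A : H →L[ℂ] H)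
    {x : H} (hx : x ∈ K) : ‖⟪x, A x⟫_ℂ‖ ≤ berNum K A :=
  le_ciSup (berNum_bdd K hKunit A) ⟨x, hx⟩

lemma berNum_nonneg (K : Set H) (A : H →L[ℂ] H) : 0 ≤ berNum K A :=
  Real.iSup_nonneg fun _ => norm_nonneg _

lemma berNum_le (K : Set H) (hK : K.Nonempty) {A : H →L[ℂ] H} {M : ℝ}
    (h : ∀ x ∈ K, ‖⟪x, A x⟫_ℂ‖ ≤ M) : berNum K A ≤ M := by
  haveI : Nonempty K := hK.to_subtype
  exact ciSup_le fun x => h x x.2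

lemma inner_reOp (A : H →L[ℂ] H) (x : H) :
    ⟪x, reOp A x⟫_ℂ = ((⟪x, A x⟫_ℂ).re : ℂ) := by
  have h : ⟪x, adjoint A x⟫_ℂ = (starRingEnd ℂ) ⟪x, A x⟫_ℂ := by
    rw [adjoint_inner_right, ← inner_conj_symm]
  simp only [reOp, smul_apply, add_apply, inner_smul_right, inner_add_right, h]
  rw [Complex.add_conj]
  push_cast
  ring

lemma inner_imOp (A : H →L[ℂ] H) (x : H) :
    ⟪x, imOp A x⟫_ℂ = ((⟪x, A x⟫_ℂ).im : ℂ) := by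
  have h : ⟪x, adjoint A x⟫_ℂ = (starRingEnd ℂ) ⟪x, A x⟫_ℂ := by
    rw [adjoint_inner_right, ← inner_conj_symm]
  simp only [imOp, smul_apply, sub_apply, inner_smul_right, inner_sub_right, h]
  rw [Complex.sub_conj]
  have : (2 : ℂ) * Complex.I ≠ 0 := by
    simp [Complex.I_ne_zero]
  field_simp
  push_cast
  ring

lemma reOp_inner_symm (A : H →L[ℂ] H) (x y : H) :
    ⟪x, reOp A y⟫_ℂ = ⟪reOp A x, y⟫_ℂ := by
  simp only [reOp, smul_apply, add_apply, inner_smul_right, inner_smul_left,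
    inner_add_right, inner_add_left, adjoint_inner_left, adjoint_inner_right]
  rw [map_inv₀, map_ofNat]
  ring

lemma imOp_inner_symm (A : H →L[ℂ] H) (x y : H) :
    ⟪x, imOp A y⟫_ℂ = ⟪imOp A x, y⟫_ℂ := by
  simp only [imOp, smul_apply, sub_apply, inner_smul_right, inner_smul_left,
    inner_sub_right, inner_sub_left, adjoint_inner_left, adjoint_inner_right]
  rw [map_inv₀, map_mul, Complex.conj_I, map_ofNat]
  have h2 : (2 : ℂ) * Complex.I ≠ 0 := by simp [Complex.I_ne_zero]
  have h2' : (2 : ℂ) * -Complex.I ≠ 0 := by simp [Complex.I_ne_zero]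
  field_simp
  ring

/-- scalar sector fact -/
lemma sector_im_le {θ : ℝ} (hθ : θ ∈ Set.Ico 0 (Real.pi / 2)) {z : ℂ}
    (hre : 0 ≤ z.re) (him : |z.im| ≤ Real.tan θ * z.re) :
    |z.im| ≤ Real.sin θ * ‖z‖ := by
  have hπ := Real.pi_pos
  have hcos : 0 < Real.cos θ :=
    Real.cos_pos_of_mem_Ioo ⟨by linarith [hθ.1], hθ.2⟩
  have hsin : 0 ≤ Real.sin θ := Real.sin_nonneg_of_nonneg_of_le_pi hθ.1 (by linarith [hθ.2])
  have h1 : |z.im| * Real.cos θ ≤ Real.sin θ * z.re := by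
    have h := mul_le_mul_of_nonneg_right him hcos.le
    rw [Real.tan_eq_sin_div_cos] at h
    have he : Real.sin θ / Real.cos θ * z.re * Real.cos θ = Real.sin θ * z.re := by
      field_simp
    linarith
  have habs : (‖z‖) ^ 2 = z.re ^ 2 + z.im ^ 2 := by
    rw [Complex.sq_norm, Complex.normSq_apply]; ring
  have hpyth := Real.sin_sq_add_cos_sq θ
  have ha : 0 ≤ ‖z‖ := norm_nonneg _
  nlinarith [abs_nonneg z.im, sq_abs z.im, mul_self_nonneg (|z.im| * Real.cos θ),
    mul_le_mul h1 h1 (by positivity) (by positivity),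
    mul_nonneg hsin ha, sq_nonneg (Real.sin θ * ‖z‖ - |z.im|)]

lemma berNum_reOp_le (K : Set H) (hK : K.Nonempty) (hKunit : ∀ x ∈ K, ‖x‖ = 1)
    (A : H →L[ℂ] H) : berNum K (reOp A) ≤ berNum K A := by
  refine berNum_le K hK fun x hx => ?_
  rw [inner_reOp, Complex.norm_real, Real.norm_eq_abs]
  exact le_trans (Complex.abs_re_le_norm _) (le_berNum K hKunit A hx)

lemma berNum_imOp_le (K : Set H) (hK : K.Nonempty) (hKunit : ∀ x ∈ K, ‖x‖ = 1)
    {θ : ℝ} (hθ : θ ∈ Set.Ico 0 (Real.pi / 2)) {A : H →L[ℂ] H}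
    (hA : BerSectorial K θ A) :
    berNum K (imOp A) ≤ Real.sin θ * berNum K A := by
  have hsin : 0 ≤ Real.sin θ := Real.sin_nonneg_of_nonneg_of_le_pi hθ.1
    (by linarith [hθ.2, Real.pi_pos])
  refine berNum_le K hK fun x hx => ?_
  rw [inner_imOp, Complex.norm_real, Real.norm_eq_abs]
  calc |(⟪x, A x⟫_ℂ).im| ≤ Real.sin θ * ‖⟪x, A x⟫_ℂ‖ :=
        sector_im_le hθ (hA x hx).1 (hA x hx).2
    _ ≤ Real.sin θ * berNum K A :=
        mul_le_mul_of_nonneg_left (le_berNum K hKunit A hx) hsin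

/-- squared norm of the self-adjoint real/imag parts at a point of K -/
lemma norm_reOp_apply_sq_le (K : Set H) (hKunit : ∀ x ∈ K, ‖x‖ = 1)
    {θ : ℝ} {A : H →L[ℂ] H} (hA : BerSectorialP K θ A) {x : H} (hx : x ∈ K) :
    ‖reOp A x‖ ^ 2 ≤ berNum K (reOp A) ^ 2 := by
  have h1 : ⟪x, (reOp A ^ 2) x⟫_ℂ = ⟪reOp A x, reOp A x⟫_ℂ := by
    rw [pow_two, ContinuousLinearMap.mul_apply, reOp_inner_symm]
  have h2 : ‖⟪x, (reOp A ^ 2) x⟫_ℂ‖ = ‖reOp A x‖ ^ 2 := by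
    rw [h1, inner_self_eq_norm_sq_to_K]
    simp
  calc ‖reOp A x‖ ^ 2 = ‖⟪x, (reOp A ^ 2) x⟫_ℂ‖ := h2.symm
    _ ≤ berNum K (reOp A ^ 2) := le_berNum K hKunit _ hx
    _ ≤ berNum K (reOp A) ^ 2 := (hA.2 2 (by norm_num)).1

lemma norm_imOp_apply_sq_le (K : Set H) (hKunit : ∀ x ∈ K, ‖x‖ = 1)
    {θ : ℝ} {A : H →L[ℂ] H} (hA : BerSectorialP K θ A) {x : H} (hx : x ∈ K) :
    ‖imOp A x‖ ^ 2 ≤ berNum K (imOp A) ^ 2 := by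
  have h1 : ⟪x, (imOp A ^ 2) x⟫_ℂ = ⟪imOp A x, imOp A x⟫_ℂ := by
    rw [pow_two, ContinuousLinearMap.mul_apply, imOp_inner_symm]
  have h2 : ‖⟪x, (imOp A ^ 2) x⟫_ℂ‖ = ‖imOp A x‖ ^ 2 := by
    rw [h1, inner_self_eq_norm_sq_to_K]
    simp
  calc ‖imOp A x‖ ^ 2 = ‖⟪x, (imOp A ^ 2) x⟫_ℂ‖ := h2.symm
    _ ≤ berNum K (imOp A ^ 2) := le_berNum K hKunit _ hx
    _ ≤ berNum K (imOp A) ^ 2 := (hA.2 2 (by norm_num)).2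

/-- decomposition A = Re + i Im pointwise -/
lemma apply_eq_re_add_im (A : H →L[ℂ] H) (x : H) :
    A x = reOp A x + Complex.I • imOp A x := by
  simp only [reOp, imOp, smul_apply, add_apply, sub_apply, smul_smul]
  have hI : Complex.I * (2 * Complex.I)⁻¹ = (2 : ℂ)⁻¹ := by
    field_simp [Complex.I_ne_zero]
  rw [hI]
  module

lemma adjoint_apply_eq_re_sub_im (A : H →L[ℂ] H) (x : H) :
    adjoint A x = reOp A x - Complex.I • imOp A x := by
  simp only [reOp, imOp, smul_apply, add_apply, sub_apply, smul_smul]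
  have hI : Complex.I * (2 * Complex.I)⁻¹ = (2 : ℂ)⁻¹ := by
    field_simp [Complex.I_ne_zero]
  rw [hI]
  module

lemma key_norm_bound (K : Set H) (hK : K.Nonempty) (hKunit : ∀ x ∈ K, ‖x‖ = 1)
    {θ : ℝ} (hθ : θ ∈ Set.Ico 0 (Real.pi / 2)) {A : H →L[ℂ] H}
    (hA : BerSectorialP K θ A) {x : H} (hx : x ∈ K) :
    ‖A x‖ ^ 2 + ‖adjoint A x‖ ^ 2 ≤ 2 * (1 + Real.sin θ ^ 2) * berNum K A ^ 2 := by
  have hpar : ‖A x‖ ^ 2 + ‖adjoint A x‖ ^ 2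
      = 2 * (‖reOp A x‖ ^ 2 + ‖imOp A x‖ ^ 2) := by
    rw [apply_eq_re_add_im A x, adjoint_apply_eq_re_sub_im A x]
    have h := parallelogram_law_with_norm ℂ (reOp A x) (Complex.I • imOp A x)
    have hI : ‖Complex.I • imOp A x‖ = ‖imOp A x‖ := by
      rw [norm_smul, Complex.norm_I, one_mul]
    rw [hI] at h
    nlinarith [h]
  have h1 : ‖reOp A x‖ ^ 2 ≤ berNum K (reOp A) ^ 2 := norm_reOp_apply_sq_le K hKunit hA hx
  have h2 : ‖imOp A x‖ ^ 2 ≤ berNum K (imOp A) ^ 2 := norm_imOp_apply_sq_le K hKunit hA hx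
  have h3 : berNum K (reOp A) ≤ berNum K A := berNum_reOp_le K hK hKunit A
  have h4 : berNum K (imOp A) ≤ Real.sin θ * berNum K A := berNum_imOp_le K hK hKunit hθ hA.1
  have hb0 : 0 ≤ berNum K A := berNum_nonneg K A
  have hr0 : 0 ≤ berNum K (reOp A) := berNum_nonneg K (reOp A)
  have hi0 : 0 ≤ berNum K (imOp A) := berNum_nonneg K (imOp A)
  have h3' : berNum K (reOp A) ^ 2 ≤ berNum K A ^ 2 := pow_le_pow_left₀ hr0 h3 2
  have h4' : berNum K (imOp A) ^ 2 ≤ (Real.sin θ * berNum K A) ^ 2 := pow_le_pow_left₀ hi0 h4 2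
  rw [hpar]
  nlinarith [h1, h2, h3', h4']

/-- two-variable Cauchy–Schwarz in ℝ -/
lemma cs2 {a b c d : ℝ} (ha : 0 ≤ a) (hb : 0 ≤ b) (hc : 0 ≤ c) (hd : 0 ≤ d) :
    a * c + b * d ≤ Real.sqrt (a ^ 2 + b ^ 2) * Real.sqrt (c ^ 2 + d ^ 2) := by
  rw [← Real.sqrt_mul (by positivity)]
  calc a * c + b * d = Real.sqrt ((a * c + b * d) ^ 2) :=
        (Real.sqrt_sq (by positivity)).symm
    _ ≤ Real.sqrt ((a ^ 2 + b ^ 2) * (c ^ 2 + d ^ 2)) :=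
        Real.sqrt_le_sqrt (by nlinarith [sq_nonneg (a * d - b * c)])


/-- If `S_j, T_j ∈ Π_θ^{Ber,P}` (`j = 1, …, n`) with `θ ∈ [0, π/2)` and
`S_j T_j = T_j S_j` for each `j`, then
`ber(Σ_j S_j T_j)² ≤ (1 + sin²θ)² (Σ_j ber(S_j)²) (Σ_j ber(T_j)²)`. -/
theorem berezin_sectorialP_commuting_sum_bound
    (K : Set H) (hK : K.Nonempty) (hKunit : ∀ x ∈ K, ‖x‖ = 1)
    (θ : ℝ) (hθ : θ ∈ Set.Ico 0 (Real.pi / 2))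
    (n : ℕ) (hn : 0 < n) (S T : Fin n → (H →L[ℂ] H))
    (hS : ∀ j, BerSectorialP K θ (S j)) (hT : ∀ j, BerSectorialP K θ (T j))
    (hcomm : ∀ j, S j * T j = T j * S j) :
    (berNum K (∑ j, S j * T j)) ^ 2 ≤
      (1 + Real.sin θ ^ 2) ^ 2 * (∑ j, (berNum K (S j)) ^ 2) *
        (∑ j, (berNum K (T j)) ^ 2) := by
  set c : ℝ := 1 + Real.sin θ ^ 2 with hc_def
  have hc : 0 ≤ c := by positivity
  set A' : ℝ := ∑ j, (berNum K (S j)) ^ 2 with hA'_def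
  set B' : ℝ := ∑ j, (berNum K (T j)) ^ 2 with hB'_def
  have hA0 : 0 ≤ A' := Finset.sum_nonneg fun j _ => sq_nonneg _
  have hB0 : 0 ≤ B' := Finset.sum_nonneg fun j _ => sq_nonneg _
  set R : ℝ := c ^ 2 * A' * B' with hR_def
  have hR : 0 ≤ R := by positivity
  have hber : berNum K (∑ j, S j * T j) ≤ Real.sqrt R := by
    refine berNum_le K hK fun x hx => ?_
    have hsum_apply : (∑ j, S j * T j) x = ∑ j, (S j) ((T j) x) := by
      simp [ContinuousLinearMap.sum_apply, ContinuousLinearMap.mul_apply]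
    rw [hsum_apply, inner_sum]
    calc ‖∑ j, ⟪x, (S j) ((T j) x)⟫_ℂ‖
        ≤ ∑ j, ‖⟪x, (S j) ((T j) x)⟫_ℂ‖ := norm_sum_le _ _
      _ ≤ ∑ j, (2 : ℝ)⁻¹ *
            (Real.sqrt (‖(S j) x‖ ^ 2 + ‖adjoint (S j) x‖ ^ 2) *
             Real.sqrt (‖(T j) x‖ ^ 2 + ‖adjoint (T j) x‖ ^ 2)) := by
          refine Finset.sum_le_sum fun j _ => ?_
          have hcj : (S j) ((T j) x) = (T j) ((S j) x) := by
            have h := congrArg (fun B : H →L[ℂ] H => B x) (hcomm j)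
            simpa [ContinuousLinearMap.mul_apply] using h
          have hz : ⟪x, (S j) ((T j) x)⟫_ℂ = (2 : ℂ)⁻¹ *
              (⟪adjoint (S j) x, (T j) x⟫_ℂ + ⟪adjoint (T j) x, (S j) x⟫_ℂ) := by
            rw [adjoint_inner_left, adjoint_inner_left, ← hcj]
            ring
          have habs : ‖⟪x, (S j) ((T j) x)⟫_ℂ‖ ≤
              (2 : ℝ)⁻¹ * (‖adjoint (S j) x‖ * ‖(T j) x‖ + ‖adjoint (T j) x‖ * ‖(S j) x‖) := by
            rw [hz, norm_mul]
            have h2 : ‖(2 : ℂ)⁻¹‖ = (2 : ℝ)⁻¹ := by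
              rw [norm_inv]; simp
            rw [h2]
            refine mul_le_mul_of_nonneg_left ?_ (by norm_num)
            refine le_trans (norm_add_le _ _) ?_
            exact add_le_add (norm_inner_le_norm (𝕜 := ℂ) _ _) (norm_inner_le_norm (𝕜 := ℂ) _ _)
          refine le_trans habs ?_
          refine mul_le_mul_of_nonneg_left ?_ (by norm_num)
          have := cs2 (a := ‖adjoint (S j) x‖) (b := ‖(S j) x‖)
            (c := ‖(T j) x‖) (d := ‖adjoint (T j) x‖)
            (norm_nonneg _) (norm_nonneg _) (norm_nonneg _) (norm_nonneg _)
          calc ‖adjoint (S j) x‖ * ‖(T j) x‖ + ‖adjoint (T j) x‖ * ‖(S j) x‖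
              = ‖adjoint (S j) x‖ * ‖(T j) x‖ + ‖(S j) x‖ * ‖adjoint (T j) x‖ := by ring
            _ ≤ Real.sqrt (‖adjoint (S j) x‖ ^ 2 + ‖(S j) x‖ ^ 2) *
                Real.sqrt (‖(T j) x‖ ^ 2 + ‖adjoint (T j) x‖ ^ 2) := this
            _ = Real.sqrt (‖(S j) x‖ ^ 2 + ‖adjoint (S j) x‖ ^ 2) *
                Real.sqrt (‖(T j) x‖ ^ 2 + ‖adjoint (T j) x‖ ^ 2) := by rw [add_comm (‖adjoint (S j) x‖ ^ 2)]
      _ = (2 : ℝ)⁻¹ * ∑ j,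
            (Real.sqrt (‖(S j) x‖ ^ 2 + ‖adjoint (S j) x‖ ^ 2) *
             Real.sqrt (‖(T j) x‖ ^ 2 + ‖adjoint (T j) x‖ ^ 2)) := by
          rw [Finset.mul_sum]
      _ ≤ (2 : ℝ)⁻¹ * (Real.sqrt (∑ j, (‖(S j) x‖ ^ 2 + ‖adjoint (S j) x‖ ^ 2)) *
            Real.sqrt (∑ j, (‖(T j) x‖ ^ 2 + ‖adjoint (T j) x‖ ^ 2))) := by
          refine mul_le_mul_of_nonneg_left ?_ (by norm_num)
          exact Real.sum_sqrt_mul_sqrt_le _ (fun j => by positivity) (fun j => by positivity)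
      _ ≤ (2 : ℝ)⁻¹ * (Real.sqrt (2 * c * A') * Real.sqrt (2 * c * B')) := by
          refine mul_le_mul_of_nonneg_left ?_ (by norm_num)
          have hSsum : ∑ j, (‖(S j) x‖ ^ 2 + ‖adjoint (S j) x‖ ^ 2) ≤ 2 * c * A' := by
            rw [hA'_def, Finset.mul_sum]
            exact Finset.sum_le_sum fun j _ => key_norm_bound K hK hKunit hθ (hS j) hx
          have hTsum : ∑ j, (‖(T j) x‖ ^ 2 + ‖adjoint (T j) x‖ ^ 2) ≤ 2 * c * B' := by
            rw [hB'_def, Finset.mul_sum]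
            exact Finset.sum_le_sum fun j _ => key_norm_bound K hK hKunit hθ (hT j) hx
          exact mul_le_mul (Real.sqrt_le_sqrt hSsum) (Real.sqrt_le_sqrt hTsum) (Real.sqrt_nonneg _) (Real.sqrt_nonneg _)
      _ = Real.sqrt R := by
          rw [← Real.sqrt_mul (by positivity)]
          have h4 : (2 * c * A') * (2 * c * B') = 4 * R := by rw [hR_def]; ring
          rw [h4, Real.sqrt_mul (by norm_num : (0:ℝ) ≤ 4),
            show (4 : ℝ) = 2 ^ 2 by norm_num, Real.sqrt_sq (by norm_num : (0:ℝ) ≤ 2)]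
          ring
  calc (berNum K (∑ j, S j * T j)) ^ 2 ≤ Real.sqrt R ^ 2 :=
        pow_le_pow_left₀ (berNum_nonneg K _) hber 2
    _ = R := Real.sq_sqrt hR
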